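/- Under Assumption A1 with 0 < μ ≤ 1, write r = rank(X⋆). Then the eigenvalues λ₁(W) ≥ … ≥ λₙ(W) of the Nesterov–Todd scaling point W satisfy C₁/√μ ≥ λ₁(W) ≥ λ_r(W) ≥ 1/(C₂·√μ) and C₁·√μ ≥ λ_{r+1}(W) ≥ λₙ(W) ≥ √μ/C₁, where C₁ = (1+L)/(1−δ) and C₂ = 4χ₁ + 2L²χ₁/(1−δ). -/

import Mathlib

open Matrix
open scoped Kronecker

noncomputable section

/-- Euclidean norm of a vector. -/
def vnorm {I : Type*} [Fintype I] (v : I → ℝ) : ℝ := Real.sqrt (∑ i, v i ^ 2)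

/-- Frobenius norm of a matrix. -/
def frobNorm {I J : Type*} [Fintype I] [Fintype J] (A : Matrix I J ℝ) : ℝ :=
  Real.sqrt (∑ i, ∑ j, A i j ^ 2)

/-- Spectral norm (ℓ₂ operator norm) of a matrix. -/
def specNorm {I J : Type*} [Fintype I] [Fintype J] (A : Matrix I J ℝ) : ℝ :=
  sSup {c | ∃ v : J → ℝ, vnorm v ≤ 1 ∧ c = vnorm (A *ᵥ v)}

/-- Largest (real) eigenvalue of a square matrix. -/
def lmax {I : Type*} [Fintype I] (A : Matrix I I ℝ) : ℝ :=
  sSup {t | ∃ v : I → ℝ, v ≠ 0 ∧ A *ᵥ v = t • v}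

/-- Smallest (real) eigenvalue of a square matrix. -/
def lmin {I : Type*} [Fintype I] (A : Matrix I I ℝ) : ℝ :=
  sInf {t | ∃ v : I → ℝ, v ≠ 0 ∧ A *ᵥ v = t • v}

/-- Column-stacking vectorization `vec`: `vecM X (j, i) = X i j`. -/
def vecM {J : Type*} (X : Matrix J J ℝ) : J × J → ℝ := fun p => X p.2 p.1

/-- `Ψ` is an orthonormal basis matrix for the space of vectorized symmetric matrices:
`ΨᵀΨ = I` and `ΨΨᵀ` is the orthogonal projection onto vectorized symmetric matrices. -/
def IsSymBasis {J K : Type*} [Fintype J] [Fintype K] [DecidableEq K]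
    (Ψ : Matrix (J × J) K ℝ) : Prop :=
  Ψᵀ * Ψ = 1 ∧ ∀ X : Matrix J J ℝ, Ψ *ᵥ (Ψᵀ *ᵥ vecM X) = vecM ((1/2 : ℝ) • (X + Xᵀ))

/-- Symmetric vectorization with respect to the basis matrix `Ψ`. -/
def svec {J K : Type*} [Fintype J] (Ψ : Matrix (J × J) K ℝ) (X : Matrix J J ℝ) : K → ℝ :=
  Ψᵀ *ᵥ vecM X

/-- Symmetric Kronecker product with respect to the basis matrices `Ψ₁, Ψ₂`. -/
def skron {J J' K K' : Type*} [Fintype J] [Fintype J']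
    (Ψ₁ : Matrix (J × J) K ℝ) (Ψ₂ : Matrix (J' × J') K' ℝ)
    (A B : Matrix J J' ℝ) : Matrix K K' ℝ :=
  (1/2 : ℝ) • (Ψ₁ᵀ * ((A ⊗ₖ B + B ⊗ₖ A) * Ψ₂))

/-- Positive semidefinite square root (junk value `0` off the PSD cone). -/
def psqrt {J : Type*} [Fintype J] [DecidableEq J] (A : Matrix J J ℝ) : Matrix J J ℝ :=
  @dite _ A.PosSemidef (Classical.dec _) (fun h => (h.1.eigenvectorUnitary : Matrix J J ℝ) *
    diagonal ((↑) ∘ (√·) ∘ h.1.eigenvalues) * (star h.1.eigenvectorUnitary : Matrix J J ℝ)) (fun _ => 0)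

/-- Condition number in spectral norm. -/
def condNum {J : Type*} [Fintype J] [DecidableEq J] (M : Matrix J J ℝ) : ℝ :=
  specNorm M * specNorm M⁻¹

/-- Assumption A1: `W` is the Nesterov--Todd scaling point of a well-centered
primal-dual pair `(X, S)` that is `O(μ)`-close to a strictly complementary solution. -/
def A1 {n : ℕ} (μ L δ χ₁ : ℝ) (W X S Xs Ss : Matrix (Fin n) (Fin n) ℝ) : Prop :=
  X.PosDef ∧ S.PosDef ∧ Xs.PosSemidef ∧ Ss.PosSemidef ∧ Xs * Ss = 0 ∧
    (Xs + Ss - χ₁⁻¹ • (1 : Matrix (Fin n) (Fin n) ℝ)).PosSemidef ∧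
    ((1 : Matrix (Fin n) (Fin n) ℝ) - (Xs + Ss)).PosSemidef ∧
    W = psqrt X * (psqrt (psqrt X * S * psqrt X))⁻¹ * psqrt X ∧
    specNorm ((1/μ) • (psqrt X * S * psqrt X) - 1) ≤ δ ∧
    specNorm (X - Xs) ≤ L * μ ∧ specNorm (S - Ss) ≤ L

section Helpers
open Matrix

lemma vnorm_nonneg {I : Type*} [Fintype I] (v : I → ℝ) : 0 ≤ vnorm v := Real.sqrt_nonneg _

lemma vnorm_sq {I : Type*} [Fintype I] (v : I → ℝ) : vnorm v ^ 2 = v ⬝ᵥ v := by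
  rw [vnorm, Real.sq_sqrt (Finset.sum_nonneg fun i _ => sq_nonneg _)]
  simp [dotProduct, sq]

lemma dot_self_nonneg {I : Type*} [Fintype I] (v : I → ℝ) : 0 ≤ v ⬝ᵥ v := by
  rw [← vnorm_sq]; positivity

lemma abs_dot_le {I : Type*} [Fintype I] (u v : I → ℝ) : |u ⬝ᵥ v| ≤ vnorm u * vnorm v := by
  have h := Finset.sum_mul_sq_le_sq_mul_sq Finset.univ u v
  have : |u ⬝ᵥ v| ^ 2 ≤ (vnorm u * vnorm v) ^ 2 := by
    rw [sq_abs, mul_pow, vnorm_sq, vnorm_sq]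
    simpa [dotProduct, sq] using h
  exact abs_le.mpr (abs_le_of_sq_le_sq' (by rwa [sq_abs] at this) (mul_nonneg (vnorm_nonneg _) (vnorm_nonneg _)))

lemma specNorm_bddAbove {I J : Type*} [Fintype I] [Fintype J] (A : Matrix I J ℝ) :
    BddAbove {c | ∃ v : J → ℝ, vnorm v ≤ 1 ∧ c = vnorm (A *ᵥ v)} := by
  refine ⟨vnorm (fun i => ∑ j, abs (A i j)), ?_⟩
  rintro c ⟨v, hv, rfl⟩
  rw [vnorm, vnorm]
  apply Real.sqrt_le_sqrt
  apply Finset.sum_le_sum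
  intro i _
  have hvj : ∀ j, |v j| ≤ 1 := by
    intro j
    have h2 : |v j| ≤ vnorm v := by
      rw [vnorm, ← Real.sqrt_sq_eq_abs]
      exact Real.sqrt_le_sqrt (Finset.single_le_sum (fun k _ => sq_nonneg (v k)) (Finset.mem_univ j))
    linarith
  have h1 : |(A *ᵥ v) i| ≤ ∑ j, abs (A i j) := by
    have e : (A *ᵥ v) i = ∑ j, A i j * v j := rfl
    rw [e]
    refine (Finset.abs_sum_le_sum_abs _ _).trans (Finset.sum_le_sum fun j _ => ?_)
    have e2 : |A i j * v j| = |A i j| * |v j| := abs_mul _ _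
    rw [e2]
    nlinarith [abs_nonneg (A i j), abs_nonneg (v j), hvj j]
  calc (A *ᵥ v) i ^ 2 = |(A *ᵥ v) i| ^ 2 := (sq_abs _).symm
    _ ≤ (∑ j, abs (A i j)) ^ 2 := by
        apply pow_le_pow_left₀ (abs_nonneg _) h1
    _ = (fun i => ∑ j, abs (A i j)) i ^ 2 := rfl

lemma le_specNorm {I J : Type*} [Fintype I] [Fintype J] (A : Matrix I J ℝ) (v : J → ℝ)
    (hv : vnorm v ≤ 1) : vnorm (A *ᵥ v) ≤ specNorm A :=
  le_csSup (specNorm_bddAbove A) ⟨v, hv, rfl⟩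

/-- quadratic form bound from spectral norm bound -/
lemma quadform_le_of_specNorm {I : Type*} [Fintype I] (A : Matrix I I ℝ) {c : ℝ}
    (h : specNorm A ≤ c) (v : I → ℝ) : |v ⬝ᵥ A *ᵥ v| ≤ c * (v ⬝ᵥ v) := by
  rcases eq_or_ne v 0 with rfl | hv
  · simp
  · have hvv : 0 < v ⬝ᵥ v := by
      rcases lt_or_eq_of_le (dot_self_nonneg v) with h' | h'
      · exact h'
      · exact absurd (dotProduct_self_eq_zero.mp h'.symm) hv
    have ht : 0 < vnorm v := by
      have := vnorm_sq v; nlinarith [vnorm_nonneg v]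
    set u : I → ℝ := (vnorm v)⁻¹ • v with hu
    have hun : vnorm u = 1 := by
      have : ∑ i, u i ^ 2 = ((vnorm v)⁻¹)^2 * ∑ i, v i ^ 2 := by
        simp [hu, mul_pow, Finset.mul_sum]
      rw [vnorm, this, Real.sqrt_mul (by positivity), Real.sqrt_sq (by positivity), ← vnorm]
      field_simp
    have h1 : |u ⬝ᵥ A *ᵥ u| ≤ c := by
      calc |u ⬝ᵥ A *ᵥ u| ≤ vnorm u * vnorm (A *ᵥ u) := abs_dot_le _ _
        _ ≤ 1 * specNorm A := by
            rw [hun, one_mul, one_mul]; exact le_specNorm A u hun.le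
        _ ≤ c := by rw [one_mul]; exact h
    have hexp : u ⬝ᵥ A *ᵥ u = ((vnorm v)⁻¹)^2 * (v ⬝ᵥ A *ᵥ v) := by
      simp [hu, mulVec_smul, smul_dotProduct, dotProduct_smul, sq, mul_assoc]
    have hvnsq : (vnorm v)^2 = v ⬝ᵥ v := vnorm_sq v
    rw [hexp, abs_mul, abs_of_nonneg (by positivity : (0:ℝ) ≤ ((vnorm v)⁻¹)^2)] at h1
    have : |v ⬝ᵥ A *ᵥ v| ≤ c * (vnorm v)^2 := by
      rw [inv_pow] at h1
      calc |v ⬝ᵥ A *ᵥ v| = (vnorm v)^2 * (((vnorm v)^2)⁻¹ * |v ⬝ᵥ A *ᵥ v|) := by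
            field_simp
        _ ≤ (vnorm v)^2 * c := by
            apply mul_le_mul_of_nonneg_left h1 (by positivity)
        _ = c * (vnorm v)^2 := mul_comm _ _
    rwa [hvnsq] at this

lemma quadform_conj (V : Matrix (Fin n) (Fin n) ℝ) (d : Fin n → ℝ) (v : Fin n → ℝ) :
    v ⬝ᵥ (V * diagonal d * Vᵀ) *ᵥ v = ∑ j, d j * ((Vᵀ *ᵥ v) j)^2 := by
  rw [← mulVec_mulVec, ← mulVec_mulVec, dotProduct_mulVec, ← mulVec_transpose]
  simp only [dotProduct, mulVec_diagonal]
  exact Finset.sum_congr rfl fun j _ => by ring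

lemma dot_eq_sum_sq (c : Fin n → ℝ) : c ⬝ᵥ c = ∑ j, (c j)^2 := by
  simp [dotProduct, sq]

lemma coord_dot (V : Matrix (Fin n) (Fin n) ℝ) (hV2 : V * Vᵀ = 1) (v : Fin n → ℝ) :
    (Vᵀ *ᵥ v) ⬝ᵥ (Vᵀ *ᵥ v) = v ⬝ᵥ v := by
  rw [dotProduct_mulVec, ← mulVec_transpose, transpose_transpose, mulVec_mulVec, hV2, one_mulVec]

/-- Spectral data for a PSD matrix `Q` whose square is sandwiched between `a•1` and `b•1`. -/
lemma psd_sandwich (Q : Matrix (Fin n) (Fin n) ℝ) (hQ : Q.PosSemidef) {a b : ℝ} (ha : 0 < a)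
    (hqa : ∀ v : Fin n → ℝ, a * (v ⬝ᵥ v) ≤ v ⬝ᵥ (Q * Q) *ᵥ v)
    (hqb : ∀ v : Fin n → ℝ, v ⬝ᵥ (Q * Q) *ᵥ v ≤ b * (v ⬝ᵥ v)) :
    (Q * Q⁻¹ = 1 ∧ Q⁻¹ * Q = 1) ∧
    (∀ v : Fin n → ℝ, v ⬝ᵥ Q *ᵥ v ≤ (Real.sqrt a)⁻¹ * (v ⬝ᵥ (Q * Q) *ᵥ v)) ∧
    (∀ v : Fin n → ℝ, v ⬝ᵥ Q⁻¹ *ᵥ v ≤ (Real.sqrt a)⁻¹ * (v ⬝ᵥ v)) ∧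
    (∀ v : Fin n → ℝ, (Real.sqrt b)⁻¹ * (v ⬝ᵥ v) ≤ v ⬝ᵥ Q⁻¹ *ᵥ v) := by
  have hH : Q.IsHermitian := hQ.1
  set V : Matrix (Fin n) (Fin n) ℝ := (hH.eigenvectorUnitary : Matrix (Fin n) (Fin n) ℝ) with hVdef
  set f : Fin n → ℝ := hH.eigenvalues with hfdef
  have hstar : star V = Vᵀ := by
    rw [star_eq_conjTranspose, conjTranspose_eq_transpose_of_trivial]
  have hV1 : Vᵀ * V = 1 := by
    rw [← hstar]; exact (Unitary.mem_iff.mp hH.eigenvectorUnitary.2).1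
  have hV2 : V * Vᵀ = 1 := by
    rw [← hstar]; exact (Unitary.mem_iff.mp hH.eigenvectorUnitary.2).2
  have hspec : Q = V * diagonal f * Vᵀ := by
    have h := hH.spectral_theorem
    rw [Unitary.conjStarAlgAut_apply, hstar] at h
    convert h using 3
    · rfl
    · rfl
    · simp [hfdef, Function.comp_def]
  have hf0 : ∀ i, 0 ≤ f i := fun i => hQ.eigenvalues_nonneg i
  have hQQ : Q * Q = V * diagonal (fun i => f i * f i) * Vᵀ := by
    rw [hspec]
    simp only [Matrix.mul_assoc]
    rw [← Matrix.mul_assoc Vᵀ V, hV1, Matrix.one_mul,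
      ← Matrix.mul_assoc (diagonal f) (diagonal f), diagonal_mul_diagonal]
  have hfi : ∀ i, Real.sqrt a ≤ f i ∧ f i ≤ Real.sqrt b := by
    intro i
    set v : Fin n → ℝ := V *ᵥ Pi.single i 1 with hv
    have hc : Vᵀ *ᵥ v = Pi.single i 1 := by
      rw [hv, mulVec_mulVec, hV1, one_mulVec]
    have hvv : v ⬝ᵥ v = 1 := by
      rw [← coord_dot V hV2 v, hc]
      simp [dot_eq_sum_sq, Pi.single_apply]
    have hqf : v ⬝ᵥ (Q * Q) *ᵥ v = f i * f i := by
      rw [hQQ, quadform_conj, hc]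
      simp [Pi.single_apply]
    have h1 := hqa v
    have h2 := hqb v
    rw [hqf, hvv, mul_one] at h1 h2
    constructor
    · have h3 : Real.sqrt a ≤ Real.sqrt (f i * f i) := Real.sqrt_le_sqrt h1
      rwa [← sq, Real.sqrt_sq (hf0 i)] at h3
    · have h3 : Real.sqrt (f i * f i) ≤ Real.sqrt b := Real.sqrt_le_sqrt h2
      rwa [← sq, Real.sqrt_sq (hf0 i)] at h3
  have hsa : 0 < Real.sqrt a := Real.sqrt_pos.mpr ha
  have hfpos : ∀ i, 0 < f i := fun i => lt_of_lt_of_le hsa (hfi i).1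
  have hright : Q * (V * diagonal (fun i => (f i)⁻¹) * Vᵀ) = 1 := by
    rw [hspec]
    simp only [Matrix.mul_assoc]
    rw [← Matrix.mul_assoc Vᵀ V, hV1, Matrix.one_mul,
      ← Matrix.mul_assoc (diagonal f), diagonal_mul_diagonal]
    have he : (fun i => f i * (f i)⁻¹) = fun _ => (1:ℝ) := by
      funext i
      exact mul_inv_cancel₀ (hfpos i).ne'
    rw [he]
    have hd1 : (diagonal (fun _ => (1:ℝ)) : Matrix (Fin n) (Fin n) ℝ) = 1 := diagonal_one
    rw [hd1, Matrix.one_mul, hV2]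
  have hinv : Q⁻¹ = V * diagonal (fun i => (f i)⁻¹) * Vᵀ := inv_eq_right_inv hright
  have hQinv1 : Q * Q⁻¹ = 1 := by rw [hinv]; exact hright
  have hQinv2 : Q⁻¹ * Q = 1 := mul_eq_one_comm.mp hQinv1
  refine ⟨⟨hQinv1, hQinv2⟩, ?_, ?_, ?_⟩
  · intro v
    rw [hQQ, hspec, quadform_conj, quadform_conj, Finset.mul_sum]
    apply Finset.sum_le_sum
    intro j _
    set cj := (Vᵀ *ᵥ v) j
    have h1 : f j * cj^2 * Real.sqrt a ≤ f j * f j * cj^2 := by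
      nlinarith [mul_nonneg (mul_nonneg (hf0 j) (sq_nonneg cj)) (sub_nonneg.mpr (hfi j).1)]
    calc f j * cj^2 = (Real.sqrt a)⁻¹ * (f j * cj^2 * Real.sqrt a) := by field_simp
      _ ≤ (Real.sqrt a)⁻¹ * (f j * f j * cj^2) := by
          exact mul_le_mul_of_nonneg_left h1 (by positivity)
  · intro v
    rw [hinv, quadform_conj, ← coord_dot V hV2 v, dot_eq_sum_sq, Finset.mul_sum]
    apply Finset.sum_le_sum
    intro j _
    have h1 : (f j)⁻¹ ≤ (Real.sqrt a)⁻¹ := by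
      apply inv_anti₀ hsa (hfi j).1
    exact mul_le_mul_of_nonneg_right h1 (sq_nonneg _)
  · intro v
    rw [hinv, quadform_conj, ← coord_dot V hV2 v, dot_eq_sum_sq, Finset.mul_sum]
    apply Finset.sum_le_sum
    intro j _
    have h1 : (Real.sqrt b)⁻¹ ≤ (f j)⁻¹ := by
      apply inv_anti₀ (hfpos j) (hfi j).2
    exact mul_le_mul_of_nonneg_right h1 (sq_nonneg _)

/-- Existence of a nonzero coordinate vector in the kernel of `T` supported off `P`. -/
lemma exists_c (T : Matrix (Fin n) (Fin n) ℝ) (P : Set (Fin n)) [Fintype P]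
    (hdim : T.rank + Fintype.card P < n) :
    ∃ c : Fin n → ℝ, c ≠ 0 ∧ T *ᵥ c = 0 ∧ ∀ j ∈ P, c j = 0 := by
  classical
  let φ : (Fin n → ℝ) →ₗ[ℝ] (P → ℝ) := LinearMap.funLeft ℝ ℝ (Subtype.val)
  let K1 := LinearMap.ker T.mulVecLin
  let K2 := LinearMap.ker φ
  have hn : Module.finrank ℝ (Fin n → ℝ) = n := by simp [Module.finrank_pi]
  have hrank : T.rank = Module.finrank ℝ (LinearMap.range T.mulVecLin) := rfl
  have h1 : Module.finrank ℝ (LinearMap.range T.mulVecLin) + Module.finrank ℝ K1 = n := by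
    have h := LinearMap.finrank_range_add_finrank_ker T.mulVecLin
    rwa [hn] at h
  have h3 : Module.finrank ℝ (LinearMap.range φ) + Module.finrank ℝ K2 = n := by
    have h := LinearMap.finrank_range_add_finrank_ker φ
    rwa [hn] at h
  have h4 : Module.finrank ℝ (LinearMap.range φ) ≤ Fintype.card P := by
    have := Submodule.finrank_le (LinearMap.range φ)
    simpa [Module.finrank_pi] using this
  have h5 := Submodule.finrank_sup_add_finrank_inf_eq K1 K2
  have h6 : Module.finrank ℝ ↥(K1 ⊔ K2) ≤ n := by
    have := Submodule.finrank_le (K1 ⊔ K2)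
    rwa [hn] at this
  have hinf : 0 < Module.finrank ℝ ↥(K1 ⊓ K2) := by omega
  rw [Module.finrank_pos_iff_exists_ne_zero] at hinf
  obtain ⟨⟨c, hc⟩, hc0⟩ := hinf
  refine ⟨c, ?_, ?_, ?_⟩
  · intro h; apply hc0; ext; simp [h]
  · have := hc.1
    exact LinearMap.mem_ker.mp this
  · intro j hj
    have h7 : φ c = 0 := hc.2
    have := congrFun h7 ⟨j, hj⟩
    simpa [φ, LinearMap.funLeft_apply] using this


lemma conj_dot {n : ℕ} (P A : Matrix (Fin n) (Fin n) ℝ) (hP : Pᵀ = P) (v : Fin n → ℝ) :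
    v ⬝ᵥ (P * A * P) *ᵥ v = (P *ᵥ v) ⬝ᵥ A *ᵥ (P *ᵥ v) := by
  rw [← mulVec_mulVec, ← mulVec_mulVec, dotProduct_mulVec, ← mulVec_transpose, hP]

lemma psd_quad {n : ℕ} {A : Matrix (Fin n) (Fin n) ℝ} (h : A.PosSemidef) (v : Fin n → ℝ) :
    0 ≤ v ⬝ᵥ A *ᵥ v := by simpa using h.dotProduct_mulVec_nonneg v

lemma pd_quad {n : ℕ} {A : Matrix (Fin n) (Fin n) ℝ} (h : A.PosDef) {v : Fin n → ℝ}
    (hv : v ≠ 0) : 0 < v ⬝ᵥ A *ᵥ v := by simpa using h.dotProduct_mulVec_pos hv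

lemma psqrt_spec {n : ℕ} (A : Matrix (Fin n) (Fin n) ℝ) (h : A.PosSemidef) :
    (psqrt A).PosSemidef ∧ psqrt A * psqrt A = A := by
  have hA := h.1.spectral_theorem
  simp only [Unitary.conjStarAlgAut_apply] at hA
  unfold psqrt
  rw [dif_pos h]
  have hVV : (star h.1.eigenvectorUnitary : Matrix (Fin n) (Fin n) ℝ) *
      (h.1.eigenvectorUnitary : Matrix (Fin n) (Fin n) ℝ) = 1 := Unitary.coe_star_mul_self _
  constructor
  · have hd : (diagonal ((↑) ∘ (√·) ∘ h.1.eigenvalues) : Matrix (Fin n) (Fin n) ℝ).PosSemidef :=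
      PosSemidef.diagonal (fun i => by simp [Real.sqrt_nonneg])
    exact hd.mul_mul_conjTranspose_same _
  · conv_rhs => rw [hA]
    simp only [Matrix.mul_assoc]
    rw [← Matrix.mul_assoc (star h.1.eigenvectorUnitary : Matrix (Fin n) (Fin n) ℝ), hVV,
      Matrix.one_mul, ← Matrix.mul_assoc (diagonal _), diagonal_mul_diagonal]
    congr 1
    congr 1
    congr 1
    funext i
    simp [Real.mul_self_sqrt (h.eigenvalues_nonneg i)]

end Helpers

set_option maxHeartbeats 3000000 in
/-- Lemma 3.2, eigenvalue split of the Nesterov–Todd scaling point.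
Under Assumption A1 with `0 < μ ≤ 1` and `r = rank X⋆`, the decreasingly-sorted
eigenvalues `w` of `W` satisfy `C₁/√μ ≥ λ₁ ≥ λ_r ≥ 1/(C₂√μ)` and
`C₁√μ ≥ λ_{r+1} ≥ λ_n ≥ √μ/C₁`, where `C₁ = (1+L)/(1-δ)` and
`C₂ = 4χ₁ + 2L²χ₁/(1-δ)`. -/
theorem stmt0 {n : ℕ} (μ L δ χ₁ : ℝ)
    (W X S Xs Ss : Matrix (Fin n) (Fin n) ℝ)
    (hμ : 0 < μ) (hμ1 : μ ≤ 1) (hL : 0 ≤ L) (hδ0 : 0 ≤ δ) (hδ1 : δ < 1) (hχ : 1 ≤ χ₁)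
    (hA1 : A1 μ L δ χ₁ W X S Xs Ss)
    -- an orthonormal eigendecomposition of `W` with decreasingly sorted eigenvalues `w`
    (U : Matrix (Fin n) (Fin n) ℝ) (w : Fin n → ℝ)
    (hU : Uᵀ * U = 1) (hw : Antitone w) (hWU : W = U * Matrix.diagonal w * Uᵀ)
    (r : ℕ) (hr : r = Xs.rank) (hr0 : 0 < r) (hrn : r < n) :
    ∀ i : Fin n,
      (i.1 < r →
        1 / ((4 * χ₁ + 2 * L ^ 2 * χ₁ / (1 - δ)) * Real.sqrt μ) ≤ w i ∧
          w i ≤ (1 + L) / (1 - δ) / Real.sqrt μ) ∧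
      (r ≤ i.1 →
        Real.sqrt μ / ((1 + L) / (1 - δ)) ≤ w i ∧
          w i ≤ (1 + L) / (1 - δ) * Real.sqrt μ) := by
  obtain ⟨hXpd, hSpd, hXspsd, hSspsd, hXsSs, hlowpsd, hupppsd, hWdef, hdspec, hXnear, hSnear⟩ := hA1
  have h1δ : (0:ℝ) < 1 - δ := by linarith
  have hχ0 : (0:ℝ) < χ₁ := by linarith
  set sμ := Real.sqrt μ with hsμdef
  have hsμ : 0 < sμ := Real.sqrt_pos.mpr hμ
  have hsμ2 : sμ * sμ = μ := Real.mul_self_sqrt hμ.le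
  -- P = sqrt X
  have hXpsd := hXpd.posSemidef
  set P := psqrt X with hPdef
  have hP := psqrt_spec X hXpsd
  have hPpsd : P.PosSemidef := hP.1
  have hPsymm : Pᵀ = P := by
    have h : Pᴴ = P := hPpsd.1
    rwa [conjTranspose_eq_transpose_of_trivial] at h
  have hPP : P * P = X := hP.2
  have hPdet : IsUnit P.det := by
    have hXdet : X.det ≠ 0 := hXpd.det_pos.ne'
    have hdet : P.det * P.det = X.det := by rw [← det_mul, hPP]
    rcases eq_or_ne P.det 0 with h | h
    · exact absurd (by rw [← hdet, h, mul_zero]) hXdet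
    · exact h.isUnit
  have hPinv1 : P * P⁻¹ = 1 := mul_nonsing_inv P hPdet
  have hPinv2 : P⁻¹ * P = 1 := nonsing_inv_mul P hPdet
  have hPinvsymm : P⁻¹ᵀ = P⁻¹ := by rw [transpose_nonsing_inv, hPsymm]
  -- M and Q
  set M := P * S * P with hMdef
  have hMpsd : M.PosSemidef := by
    have h := hSpd.posSemidef.conjTranspose_mul_mul_same P
    rwa [conjTranspose_eq_transpose_of_trivial, hPsymm] at h
  set Q := psqrt M with hQdef
  have hQ := psqrt_spec M hMpsd
  have hQpsd : Q.PosSemidef := hQ.1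
  have hQQ : Q * Q = M := hQ.2
  -- quadratic form bounds on M
  have hMbounds : ∀ v : Fin n → ℝ,
      (1-δ)*μ * (v ⬝ᵥ v) ≤ v ⬝ᵥ M *ᵥ v ∧ v ⬝ᵥ M *ᵥ v ≤ (1+δ)*μ * (v ⬝ᵥ v) := by
    intro v
    have h := quadform_le_of_specNorm _ hdspec v
    have hexp : v ⬝ᵥ ((1/μ) • M - 1) *ᵥ v = (1/μ) * (v ⬝ᵥ M *ᵥ v) - v ⬝ᵥ v := by
      rw [sub_mulVec, dotProduct_sub, smul_mulVec, dotProduct_smul, one_mulVec, smul_eq_mul]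
    rw [hexp, abs_le] at h
    have hvv := dot_self_nonneg v
    have hid : μ * ((1/μ) * (v ⬝ᵥ M *ᵥ v)) = v ⬝ᵥ M *ᵥ v := by field_simp
    constructor
    · have ht : (1-δ) * (v ⬝ᵥ v) ≤ (1/μ) * (v ⬝ᵥ M *ᵥ v) := by linarith [h.1]
      have h2 := mul_le_mul_of_nonneg_left ht hμ.le
      rw [hid] at h2
      nlinarith [h2]
    · have ht : (1/μ) * (v ⬝ᵥ M *ᵥ v) ≤ (1+δ) * (v ⬝ᵥ v) := by linarith [h.2]
      have h2 := mul_le_mul_of_nonneg_left ht hμ.le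
      rw [hid] at h2
      nlinarith [h2]
  have ha : (0:ℝ) < (1-δ)*μ := mul_pos h1δ hμ
  obtain ⟨⟨hQi1, hQi2⟩, hQle, hQinvle, hQinvge⟩ :=
    psd_sandwich Q hQpsd ha
      (fun v => by rw [hQQ]; exact (hMbounds v).1)
      (fun v => by rw [hQQ]; exact (hMbounds v).2)
  have hWform : W = P * Q⁻¹ * P := hWdef
  have hWinv : W⁻¹ = P⁻¹ * Q * P⁻¹ := by
    apply inv_eq_right_inv
    rw [hWform]
    have e : P * Q⁻¹ * P * (P⁻¹ * Q * P⁻¹)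
        = P * (Q⁻¹ * ((P * P⁻¹) * (Q * P⁻¹))) := by simp only [Matrix.mul_assoc]
    rw [e, hPinv1, Matrix.one_mul, ← Matrix.mul_assoc Q⁻¹ Q, hQi2, Matrix.one_mul, hPinv1]
  -- scalar abbreviations
  have hsa_pos : 0 < Real.sqrt ((1-δ)*μ) := Real.sqrt_pos.mpr ha
  have hb : (0:ℝ) < (1+δ)*μ := by nlinarith
  have hsb_pos : 0 < Real.sqrt ((1+δ)*μ) := Real.sqrt_pos.mpr hb
  have hs1 : Real.sqrt ((1-δ)*μ) = Real.sqrt (1-δ) * sμ := Real.sqrt_mul h1δ.le μ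
  have hs1pos : 0 < Real.sqrt (1-δ) := Real.sqrt_pos.mpr h1δ
  have hs1sq : Real.sqrt (1-δ) * Real.sqrt (1-δ) = 1-δ := Real.mul_self_sqrt h1δ.le
  have hs1ge : 1-δ ≤ Real.sqrt (1-δ) := by
    nlinarith [Real.sqrt_le_one.mpr (show (1:ℝ)-δ ≤ 1 by linarith), hs1pos]
  have hsa_ge : (1-δ)*sμ ≤ Real.sqrt ((1-δ)*μ) := by
    rw [hs1]; exact mul_le_mul_of_nonneg_right hs1ge hsμ.le
  have hsb2 : Real.sqrt ((1+δ)*μ) ≤ 2 * sμ := by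
    have h4 : Real.sqrt ((1+δ)*μ) = Real.sqrt (1+δ) * sμ := Real.sqrt_mul (by linarith) μ
    have h5 : Real.sqrt (1+δ) ≤ 2 := by
      nlinarith [Real.sq_sqrt (show (0:ℝ) ≤ 1+δ by linarith), Real.sqrt_nonneg (1+δ)]
    rw [h4]; nlinarith [hsμ]
  -- key quadratic form inequalities for W
  have keyW_up : ∀ v : Fin n → ℝ,
      v ⬝ᵥ W *ᵥ v ≤ (Real.sqrt ((1-δ)*μ))⁻¹ * (v ⬝ᵥ X *ᵥ v) := by
    intro v
    have h3 : (P *ᵥ v) ⬝ᵥ (P *ᵥ v) = v ⬝ᵥ X *ᵥ v := by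
      have h4 := conj_dot P 1 hPsymm v
      rw [Matrix.mul_one, hPP, one_mulVec] at h4
      exact h4.symm
    have h2 := hQinvle (P *ᵥ v)
    rw [h3] at h2
    rw [hWform, conj_dot P Q⁻¹ hPsymm]
    exact h2
  have keyW_lo : ∀ v : Fin n → ℝ,
      (Real.sqrt ((1+δ)*μ))⁻¹ * (v ⬝ᵥ X *ᵥ v) ≤ v ⬝ᵥ W *ᵥ v := by
    intro v
    have h3 : (P *ᵥ v) ⬝ᵥ (P *ᵥ v) = v ⬝ᵥ X *ᵥ v := by
      have h4 := conj_dot P 1 hPsymm v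
      rw [Matrix.mul_one, hPP, one_mulVec] at h4
      exact h4.symm
    have h2 := hQinvge (P *ᵥ v)
    rw [h3] at h2
    rw [hWform, conj_dot P Q⁻¹ hPsymm]
    exact h2
  have keyWinv : ∀ v : Fin n → ℝ,
      v ⬝ᵥ W⁻¹ *ᵥ v ≤ (Real.sqrt ((1-δ)*μ))⁻¹ * (v ⬝ᵥ S *ᵥ v) := by
    intro v
    rw [hWinv, conj_dot P⁻¹ Q hPinvsymm]
    have h2 := hQle (P⁻¹ *ᵥ v)
    rw [hQQ] at h2
    have h3 : (P⁻¹ *ᵥ v) ⬝ᵥ M *ᵥ (P⁻¹ *ᵥ v) = v ⬝ᵥ S *ᵥ v := by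
      rw [hMdef, conj_dot P S hPsymm, mulVec_mulVec, hPinv1, one_mulVec]
    rw [h3] at h2
    exact h2
  -- quadratic form bounds from nearness / complementarity hypotheses
  have hXq : ∀ v : Fin n → ℝ, |v ⬝ᵥ X *ᵥ v - v ⬝ᵥ Xs *ᵥ v| ≤ L*μ*(v ⬝ᵥ v) := by
    intro v
    have h := quadform_le_of_specNorm _ hXnear v
    rwa [sub_mulVec, dotProduct_sub] at h
  have hSq : ∀ v : Fin n → ℝ, |v ⬝ᵥ S *ᵥ v - v ⬝ᵥ Ss *ᵥ v| ≤ L*(v ⬝ᵥ v) := by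
    intro v
    have h := quadform_le_of_specNorm _ hSnear v
    rwa [sub_mulVec, dotProduct_sub] at h
  have hXsq_le : ∀ v : Fin n → ℝ, v ⬝ᵥ Xs *ᵥ v ≤ v ⬝ᵥ v := by
    intro v
    have h := psd_quad hupppsd v
    have hexp : v ⬝ᵥ ((1 : Matrix (Fin n) (Fin n) ℝ) - (Xs + Ss)) *ᵥ v
        = v ⬝ᵥ v - (v ⬝ᵥ Xs *ᵥ v + v ⬝ᵥ Ss *ᵥ v) := by
      rw [sub_mulVec, dotProduct_sub, one_mulVec, add_mulVec, dotProduct_add]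
    rw [hexp] at h
    linarith [psd_quad hSspsd v]
  have hSsq_le : ∀ v : Fin n → ℝ, v ⬝ᵥ Ss *ᵥ v ≤ v ⬝ᵥ v := by
    intro v
    have h := psd_quad hupppsd v
    have hexp : v ⬝ᵥ ((1 : Matrix (Fin n) (Fin n) ℝ) - (Xs + Ss)) *ᵥ v
        = v ⬝ᵥ v - (v ⬝ᵥ Xs *ᵥ v + v ⬝ᵥ Ss *ᵥ v) := by
      rw [sub_mulVec, dotProduct_sub, one_mulVec, add_mulVec, dotProduct_add]
    rw [hexp] at h
    linarith [psd_quad hXspsd v]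
  have hXs_lower : ∀ v : Fin n → ℝ, Ss *ᵥ v = 0 → χ₁⁻¹ * (v ⬝ᵥ v) ≤ v ⬝ᵥ Xs *ᵥ v := by
    intro v hv
    have h := psd_quad hlowpsd v
    have hexp : v ⬝ᵥ (Xs + Ss - χ₁⁻¹ • (1 : Matrix (Fin n) (Fin n) ℝ)) *ᵥ v
        = v ⬝ᵥ Xs *ᵥ v + v ⬝ᵥ Ss *ᵥ v - χ₁⁻¹ * (v ⬝ᵥ v) := by
      rw [sub_mulVec, dotProduct_sub, add_mulVec, dotProduct_add, smul_mulVec,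
        dotProduct_smul, one_mulVec, smul_eq_mul]
    rw [hexp, hv, dotProduct_zero] at h
    linarith
  -- eigen-coordinate facts
  have hU2 : U * Uᵀ = 1 := mul_eq_one_comm.mp hU
  have hWquad : ∀ v : Fin n → ℝ, v ⬝ᵥ W *ᵥ v = ∑ j, w j * ((Uᵀ *ᵥ v) j)^2 := by
    intro v; rw [hWU]; exact quadform_conj U w v
  have hUsingle : ∀ i : Fin n, Uᵀ *ᵥ (U *ᵥ Pi.single i 1) = Pi.single i 1 := by
    intro i; rw [mulVec_mulVec, hU, one_mulVec]
  have hone : ∀ i : Fin n, (U *ᵥ Pi.single i 1) ⬝ᵥ (U *ᵥ Pi.single i 1) = 1 := by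
    intro i
    rw [← coord_dot U hU2, hUsingle]
    simp [dot_eq_sum_sq, Pi.single_apply]
  have hWsingle : ∀ i : Fin n, (U *ᵥ Pi.single i 1) ⬝ᵥ W *ᵥ (U *ᵥ Pi.single i 1) = w i := by
    intro i
    rw [hWquad, hUsingle]
    simp [Pi.single_apply]
  have hwpos : ∀ i, 0 < w i := by
    intro i
    have hvv := hone i
    have hvne : U *ᵥ Pi.single i 1 ≠ 0 := by
      intro h; rw [h] at hvv; simp at hvv
    have hXv := pd_quad hXpd hvne
    have h2 := keyW_lo (U *ᵥ Pi.single i 1)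
    have h3 := hWsingle i
    have h4 := mul_pos (inv_pos.mpr hsb_pos) hXv
    linarith
  have hWinvU : W⁻¹ = U * diagonal (fun j => (w j)⁻¹) * Uᵀ := by
    apply inv_eq_right_inv
    rw [hWU]
    have e : U * diagonal w * Uᵀ * (U * diagonal (fun j => (w j)⁻¹) * Uᵀ)
        = U * (diagonal w * ((Uᵀ * U) * (diagonal (fun j => (w j)⁻¹) * Uᵀ))) := by
      simp only [Matrix.mul_assoc]
    rw [e, hU, Matrix.one_mul, ← Matrix.mul_assoc (diagonal w), diagonal_mul_diagonal]
    have he : (fun i => w i * (w i)⁻¹) = fun _ => (1:ℝ) :=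
      funext fun i => mul_inv_cancel₀ (hwpos i).ne'
    rw [he]
    have hd1 : (diagonal (fun _ => (1:ℝ)) : Matrix (Fin n) (Fin n) ℝ) = 1 := diagonal_one
    rw [hd1, Matrix.one_mul, hU2]
  have hWinvquad : ∀ v : Fin n → ℝ, v ⬝ᵥ W⁻¹ *ᵥ v = ∑ j, (w j)⁻¹ * ((Uᵀ *ᵥ v) j)^2 := by
    intro v; rw [hWinvU]; exact quadform_conj U _ v
  have hWinvsingle : ∀ i : Fin n,
      (U *ᵥ Pi.single i 1) ⬝ᵥ W⁻¹ *ᵥ (U *ᵥ Pi.single i 1) = (w i)⁻¹ := by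
    intro i
    rw [hWinvquad, hUsingle]
    simp [Pi.single_apply]
  have glob_up : ∀ i : Fin n, w i ≤ (1 + L) / (1 - δ) / sμ := by
    intro i
    have hvv := hone i
    have h1' := keyW_up (U *ᵥ Pi.single i 1)
    have h5' : (U *ᵥ Pi.single i 1) ⬝ᵥ X *ᵥ (U *ᵥ Pi.single i 1) ≤ 1 + L*μ := by
      have h2' := (abs_le.mp (hXq (U *ᵥ Pi.single i 1))).2
      have h3' := hXsq_le (U *ᵥ Pi.single i 1)
      rw [hvv] at h2'
      linarith
    have h6 : (Real.sqrt ((1-δ)*μ))⁻¹ ≤ ((1-δ)*sμ)⁻¹ := inv_anti₀ (by positivity) hsa_ge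
    have h7 : w i ≤ (Real.sqrt ((1-δ)*μ))⁻¹ * (1 + L*μ) := by
      have h8' := mul_le_mul_of_nonneg_left h5' (inv_nonneg.mpr hsa_pos.le)
      calc w i = (U *ᵥ Pi.single i 1) ⬝ᵥ W *ᵥ (U *ᵥ Pi.single i 1) := (hWsingle i).symm
        _ ≤ _ := h1'
        _ ≤ _ := h8'
    have h8 : (0:ℝ) < 1 + L*μ := by nlinarith
    calc w i ≤ (Real.sqrt ((1-δ)*μ))⁻¹ * (1 + L*μ) := h7
      _ ≤ ((1-δ)*sμ)⁻¹ * (1 + L*μ) := mul_le_mul_of_nonneg_right h6 h8.le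
      _ ≤ ((1-δ)*sμ)⁻¹ * (1 + L) := by
          apply mul_le_mul_of_nonneg_left _ (by positivity)
          linarith [mul_le_of_le_one_right hL hμ1]
      _ = (1 + L) / (1 - δ) / sμ := by rw [div_div, div_eq_mul_inv, mul_comm]
  have glob_lo : ∀ i : Fin n, sμ / ((1 + L) / (1 - δ)) ≤ w i := by
    intro i
    have hvv := hone i
    have h1' := keyWinv (U *ᵥ Pi.single i 1)
    have h5' : (U *ᵥ Pi.single i 1) ⬝ᵥ S *ᵥ (U *ᵥ Pi.single i 1) ≤ 1 + L := by
      have h2' := (abs_le.mp (hSq (U *ᵥ Pi.single i 1))).2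
      have h3' := hSsq_le (U *ᵥ Pi.single i 1)
      rw [hvv] at h2'
      linarith
    have h7 : (w i)⁻¹ ≤ (Real.sqrt ((1-δ)*μ))⁻¹ * (1 + L) := by
      rw [← hWinvsingle i]
      calc _ ≤ _ := h1'
        _ ≤ _ := mul_le_mul_of_nonneg_left h5' (inv_nonneg.mpr hsa_pos.le)
    have h9 := inv_anti₀ (inv_pos.mpr (hwpos i)) h7
    rw [inv_inv] at h9
    have h10 : sμ / ((1+L)/(1-δ)) ≤ ((Real.sqrt ((1-δ)*μ))⁻¹ * (1+L))⁻¹ := by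
      rw [mul_inv, inv_inv]
      have e : sμ / ((1+L)/(1-δ)) = (1-δ)*sμ * (1+L)⁻¹ := by
        field_simp
      rw [e]
      exact mul_le_mul_of_nonneg_right hsa_ge (inv_nonneg.mpr (by linarith))
    exact le_trans h10 h9
  have spec_up : ∀ i : Fin n, r ≤ i.1 → w i ≤ (1 + L) / (1 - δ) * sμ := by
    intro i hi
    have hrank1 : (Xs * U).rank ≤ r := by
      rw [hr]; exact Matrix.rank_mul_le_left Xs U
    have hcard : Fintype.card (Set.Ioi i) = n - 1 - i.1 := by rw [← Set.toFinset_card, Set.toFinset_Ioi, Fin.card_Ioi]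
    obtain ⟨c, hc0, hTc, hsupp⟩ := exists_c (Xs*U) (Set.Ioi i) (by
      have := i.isLt
      omega)
    have hcoord : Uᵀ *ᵥ (U *ᵥ c) = c := by rw [mulVec_mulVec, hU, one_mulVec]
    have hXsv : Xs *ᵥ (U *ᵥ c) = 0 := by rw [mulVec_mulVec]; exact hTc
    have hcc : 0 < c ⬝ᵥ c := by
      rcases lt_or_eq_of_le (dot_self_nonneg c) with h | h
      · exact h
      · exact absurd (dotProduct_self_eq_zero.mp h.symm) hc0
    have hvv : (U *ᵥ c) ⬝ᵥ (U *ᵥ c) = c ⬝ᵥ c := by rw [← coord_dot U hU2, hcoord]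
    have hlow2 : w i * (c ⬝ᵥ c) ≤ (U *ᵥ c) ⬝ᵥ W *ᵥ (U *ᵥ c) := by
      rw [hWquad, hcoord, dot_eq_sum_sq, Finset.mul_sum]
      apply Finset.sum_le_sum
      intro j _
      rcases le_or_gt j i with hj | hj
      · exact mul_le_mul_of_nonneg_right (hw hj) (sq_nonneg _)
      · rw [hsupp j (Set.mem_Ioi.mpr hj)]
        simp
    have hXsq0 : (U *ᵥ c) ⬝ᵥ Xs *ᵥ (U *ᵥ c) = 0 := by rw [hXsv, dotProduct_zero]
    have hXb : (U *ᵥ c) ⬝ᵥ X *ᵥ (U *ᵥ c) ≤ L*μ*(c ⬝ᵥ c) := by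
      have h2' := (abs_le.mp (hXq (U *ᵥ c))).2
      rw [hXsq0, hvv] at h2'
      linarith
    have hup2 := keyW_up (U *ᵥ c)
    have hWb : w i * (c ⬝ᵥ c) ≤ (Real.sqrt ((1-δ)*μ))⁻¹ * (L*μ) * (c ⬝ᵥ c) := by
      have h3' := mul_le_mul_of_nonneg_left hXb (inv_nonneg.mpr hsa_pos.le)
      calc w i * (c ⬝ᵥ c) ≤ _ := hlow2
        _ ≤ _ := hup2
        _ ≤ (Real.sqrt ((1-δ)*μ))⁻¹ * (L*μ*(c ⬝ᵥ c)) := h3'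
        _ = (Real.sqrt ((1-δ)*μ))⁻¹ * (L*μ) * (c ⬝ᵥ c) := by ring
    have hwi : w i ≤ (Real.sqrt ((1-δ)*μ))⁻¹ * (L*μ) := le_of_mul_le_mul_right hWb hcc
    have h6 : (Real.sqrt ((1-δ)*μ))⁻¹ ≤ ((1-δ)*sμ)⁻¹ := inv_anti₀ (by positivity) hsa_ge
    have h9 : ((1-δ)*sμ)⁻¹ * (L*μ) ≤ (1+L)/(1-δ)*sμ := by
      rw [inv_mul_le_iff₀ (by positivity)]
      have e : (1-δ)*sμ*((1+L)/(1-δ)*sμ) = (1+L)*μ := by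
        rw [← hsμ2]; field_simp
      rw [e]
      have : L*μ ≤ (1+L)*μ := by nlinarith
      linarith
    calc w i ≤ (Real.sqrt ((1-δ)*μ))⁻¹ * (L*μ) := hwi
      _ ≤ ((1-δ)*sμ)⁻¹ * (L*μ) := mul_le_mul_of_nonneg_right h6 (by positivity)
      _ ≤ (1+L)/(1-δ)*sμ := h9
  have spec_lo : ∀ i : Fin n, i.1 < r → 1 / ((4 * χ₁ + 2 * L ^ 2 * χ₁ / (1 - δ)) * sμ) ≤ w i := by
    intro i hi
    have hC2pos : (0:ℝ) < 4*χ₁ + 2*L^2*χ₁/(1-δ) := by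
      have h0' : (0:ℝ) ≤ L^2*χ₁ := mul_nonneg (sq_nonneg L) hχ0.le
      have h0 : (0:ℝ) ≤ 2*L^2*χ₁/(1-δ) := div_nonneg (by linarith) h1δ.le
      linarith
    have hsub : LinearMap.range (Ss.mulVecLin) ≤ LinearMap.ker (Xs.mulVecLin) := by
      rintro x ⟨u, rfl⟩
      simp only [LinearMap.mem_ker, Matrix.mulVecLin_apply, mulVec_mulVec, hXsSs, zero_mulVec]
    have hSsrank : Ss.rank ≤ n - r := by
      have h1' : Ss.rank ≤ Module.finrank ℝ (LinearMap.ker (Xs.mulVecLin)) :=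
        Submodule.finrank_mono hsub
      have h2' := LinearMap.finrank_range_add_finrank_ker (Xs.mulVecLin)
      have hn : Module.finrank ℝ (Fin n → ℝ) = n := by simp [Module.finrank_pi]
      rw [hn] at h2'
      have h3' : Xs.rank = Module.finrank ℝ (LinearMap.range Xs.mulVecLin) := rfl
      omega
    have hrank1 : (Ss * U).rank ≤ n - r := le_trans (Matrix.rank_mul_le_left Ss U) hSsrank
    have hcard : Fintype.card (Set.Iio i) = i.1 := by rw [← Set.toFinset_card, Set.toFinset_Iio, Fin.card_Iio]
    obtain ⟨c, hc0, hTc, hsupp⟩ := exists_c (Ss*U) (Set.Iio i) (by omega)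
    have hcoord : Uᵀ *ᵥ (U *ᵥ c) = c := by rw [mulVec_mulVec, hU, one_mulVec]
    have hSsv : Ss *ᵥ (U *ᵥ c) = 0 := by rw [mulVec_mulVec]; exact hTc
    have hcc : 0 < c ⬝ᵥ c := by
      rcases lt_or_eq_of_le (dot_self_nonneg c) with h | h
      · exact h
      · exact absurd (dotProduct_self_eq_zero.mp h.symm) hc0
    have hvv : (U *ᵥ c) ⬝ᵥ (U *ᵥ c) = c ⬝ᵥ c := by rw [← coord_dot U hU2, hcoord]
    have hup2 : (U *ᵥ c) ⬝ᵥ W *ᵥ (U *ᵥ c) ≤ w i * (c ⬝ᵥ c) := by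
      rw [hWquad, hcoord, dot_eq_sum_sq, Finset.mul_sum]
      apply Finset.sum_le_sum
      intro j _
      rcases lt_or_ge j i with hj | hj
      · rw [hsupp j (Set.mem_Iio.mpr hj)]; simp
      · exact mul_le_mul_of_nonneg_right (hw hj) (sq_nonneg _)
    have hinvlow : (w i)⁻¹ * (c ⬝ᵥ c) ≤ (U *ᵥ c) ⬝ᵥ W⁻¹ *ᵥ (U *ᵥ c) := by
      rw [hWinvquad, hcoord, dot_eq_sum_sq, Finset.mul_sum]
      apply Finset.sum_le_sum
      intro j _
      rcases lt_or_ge j i with hj | hj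
      · rw [hsupp j (Set.mem_Iio.mpr hj)]; simp
      · exact mul_le_mul_of_nonneg_right (inv_anti₀ (hwpos j) (hw hj)) (sq_nonneg _)
    by_cases hLμ : L*μ ≤ (2*χ₁)⁻¹
    · -- small-perturbation case
      have hXsl := hXs_lower (U *ᵥ c) hSsv
      rw [hvv] at hXsl
      have hXlow : (χ₁⁻¹ - L*μ) * (c ⬝ᵥ c) ≤ (U *ᵥ c) ⬝ᵥ X *ᵥ (U *ᵥ c) := by
        have h2' := (abs_le.mp (hXq (U *ᵥ c))).1
        rw [hvv] at h2'
        nlinarith [h2', hXsl]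
      have hWlow := keyW_lo (U *ᵥ c)
      have hchain : (Real.sqrt ((1+δ)*μ))⁻¹ * ((χ₁⁻¹ - L*μ) * (c ⬝ᵥ c)) ≤ w i * (c ⬝ᵥ c) :=
        le_trans (mul_le_mul_of_nonneg_left hXlow (inv_nonneg.mpr hsb_pos.le))
          (le_trans hWlow hup2)
      have hwi : (Real.sqrt ((1+δ)*μ))⁻¹ * (χ₁⁻¹ - L*μ) ≤ w i := by
        apply le_of_mul_le_mul_right _ hcc
        calc (Real.sqrt ((1+δ)*μ))⁻¹ * (χ₁⁻¹ - L*μ) * (c ⬝ᵥ c)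
            = (Real.sqrt ((1+δ)*μ))⁻¹ * ((χ₁⁻¹ - L*μ) * (c ⬝ᵥ c)) := by ring
          _ ≤ w i * (c ⬝ᵥ c) := hchain
      have hq1 : (2*sμ)⁻¹ ≤ (Real.sqrt ((1+δ)*μ))⁻¹ := inv_anti₀ hsb_pos hsb2
      have hq2 : (2*χ₁)⁻¹ ≤ χ₁⁻¹ - L*μ := by
        have e : χ₁⁻¹ - (2*χ₁)⁻¹ = (2*χ₁)⁻¹ := by
          field_simp
          ring
        linarith
      have hq3 : (2*sμ)⁻¹ * (2*χ₁)⁻¹ ≤ (Real.sqrt ((1+δ)*μ))⁻¹ * (χ₁⁻¹ - L*μ) :=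
        mul_le_mul hq1 hq2 (inv_nonneg.mpr (by linarith)) (inv_nonneg.mpr hsb_pos.le)
      have hq4 : 1 / ((4*χ₁ + 2*L^2*χ₁/(1-δ))*sμ) ≤ (2*sμ)⁻¹ * (2*χ₁)⁻¹ := by
        rw [one_div, ← mul_inv]
        apply inv_anti₀ (mul_pos (by linarith) (by linarith))
        have h0' : (0:ℝ) ≤ L^2*χ₁ := mul_nonneg (sq_nonneg L) hχ0.le
        have h0 : (0:ℝ) ≤ 2*L^2*χ₁/(1-δ) := div_nonneg (by linarith) h1δ.le
        nlinarith [mul_nonneg h0 hsμ.le]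
      exact le_trans hq4 (le_trans hq3 hwi)
    · -- large-perturbation case
      push_neg at hLμ
      have hLpos : 0 < L := by
        by_contra h
        push_neg at h
        have h2' : L*μ ≤ 0 := mul_nonpos_of_nonpos_of_nonneg h hμ.le
        have h3' : (0:ℝ) < (2*χ₁)⁻¹ := inv_pos.mpr (by linarith)
        linarith
      have hSsq0 : (U *ᵥ c) ⬝ᵥ Ss *ᵥ (U *ᵥ c) = 0 := by rw [hSsv, dotProduct_zero]
      have hSb : (U *ᵥ c) ⬝ᵥ S *ᵥ (U *ᵥ c) ≤ L*(c ⬝ᵥ c) := by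
        have h2' := (abs_le.mp (hSq (U *ᵥ c))).2
        rw [hSsq0, hvv] at h2'
        linarith
      have h1' := keyWinv (U *ᵥ c)
      have hchain : (w i)⁻¹ * (c ⬝ᵥ c) ≤ (Real.sqrt ((1-δ)*μ))⁻¹ * L * (c ⬝ᵥ c) := by
        calc (w i)⁻¹ * (c ⬝ᵥ c) ≤ _ := hinvlow
          _ ≤ (Real.sqrt ((1-δ)*μ))⁻¹ * ((U *ᵥ c) ⬝ᵥ S *ᵥ (U *ᵥ c)) := h1'
          _ ≤ (Real.sqrt ((1-δ)*μ))⁻¹ * (L*(c ⬝ᵥ c)) :=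
              mul_le_mul_of_nonneg_left hSb (inv_nonneg.mpr hsa_pos.le)
          _ = (Real.sqrt ((1-δ)*μ))⁻¹ * L * (c ⬝ᵥ c) := by ring
      have hwinv : (w i)⁻¹ ≤ (Real.sqrt ((1-δ)*μ))⁻¹ * L := le_of_mul_le_mul_right hchain hcc
      have hwge : ((Real.sqrt ((1-δ)*μ))⁻¹ * L)⁻¹ ≤ w i := by
        have h9 := inv_anti₀ (inv_pos.mpr (hwpos i)) hwinv
        rwa [inv_inv] at h9
      have he : ((Real.sqrt ((1-δ)*μ))⁻¹ * L)⁻¹ = Real.sqrt ((1-δ)*μ) / L := by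
        rw [mul_inv, inv_inv, div_eq_mul_inv]
      rw [he] at hwge
      have hfinal : 1 / ((4*χ₁ + 2*L^2*χ₁/(1-δ))*sμ) ≤ Real.sqrt ((1-δ)*μ) / L := by
        have hstep : 1 / ((4*χ₁ + 2*L^2*χ₁/(1-δ))*sμ) ≤ (1-δ)*sμ / L := by
          rw [div_le_div_iff₀ (mul_pos hC2pos hsμ) hLpos, one_mul]
          have e2 : (1-δ)*sμ*((4*χ₁ + 2*L^2*χ₁/(1-δ))*sμ) = (4*χ₁*(1-δ) + 2*L^2*χ₁)*μ := by
            rw [← hsμ2]; field_simp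
          rw [e2]
          have hprod : 1 < 2*χ₁*(L*μ) := by
            have h3' := (mul_lt_mul_iff_right₀ (show (0:ℝ) < 2*χ₁ by linarith)).mpr hLμ
            rwa [mul_inv_cancel₀ (show (2*χ₁:ℝ) ≠ 0 by linarith)] at h3'
          nlinarith [mul_le_mul_of_nonneg_left hprod.le hLpos.le,
            mul_nonneg (mul_nonneg (mul_nonneg (by norm_num : (0:ℝ) ≤ 4) hχ0.le) h1δ.le) hμ.le]
        apply le_trans hstep
        gcongr
      exact le_trans hfinal hwge
  intro i
  refine ⟨fun hi => ⟨spec_lo i hi, glob_up i⟩, fun hi => ⟨glob_lo i, spec_up i hi⟩⟩
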